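/- Let (Ω, 𝔽, ℙ) be a probability space and let h : Ω → ℂ^N and d : Ω → ℂ^{q} be independent random vectors with all entries square-integrable, E[d] = 0, E[d d^H] = E_s · I_q for some E_s > 0, and E[h h^H] = Σ_hh. Let F ∈ ℂ^{D×N} and B ∈ ℂ^{D×q} be deterministic matrices, and define the random vector Ψ = diag(B d) · F h ∈ ℂ^D. Then E[Ψ] = 0 and E[Ψ Ψ^H] = E_s · (F Σ_hh F^H) ∘ (B B^H), where ∘ denotes the entrywise (Hadamard) product. -/

import Mathlib

open Matrix MeasureTheory ProbabilityTheory ComplexConjugate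

/-!
The entries of `Ψ` factor as `Ψᵢ = (B d)ᵢ · (F h)ᵢ` with the first factor a function of `d` and
the second a function of `h`, and the same holds for `Ψᵢ · conj Ψⱼ`. Independence therefore splits
both moments into a product of a moment of `B d` and one of `F h`. The mean of `B d` is `B E[d] = 0`,
and second moments transform as `E[(M x)(M x)ᴴ] = M E[x xᴴ] Mᴴ`, which gives `Es · B Bᴴ` and
`F Σ_hh Fᴴ`.
-/

section SecondMoment

variable {Ω 𝕜 m n p : Type*} [RCLike 𝕜] [Fintype n] [Fintype p] [MeasurableSpace Ω]
  {μ : Measure Ω} {x : Ω → n → 𝕜} {y : Ω → p → 𝕜}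

noncomputable def secondMomentMatrix (μ : Measure Ω) (x : Ω → n → 𝕜) : Matrix n n 𝕜 :=
  Matrix.of fun k l => ∫ ω, x ω k * conj (x ω l) ∂μ

lemma integral_mulVec_apply (hx : ∀ k, Integrable (fun ω => x ω k) μ)
    (M : Matrix m n 𝕜) (i : m) :
    ∫ ω, (M *ᵥ x ω) i ∂μ = (M *ᵥ fun k => ∫ ω, x ω k ∂μ) i := by
  simp only [mulVec, dotProduct]
  rw [integral_finsetSum _ fun k _ => (hx k).const_mul _]
  simp only [integral_const_mul]

lemma MeasureTheory.MemLp.integrable_mul_conj {f g : Ω → 𝕜} (hf : MemLp f 2 μ) (hg : MemLp g 2 μ) :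
    Integrable (fun ω => f ω * conj (g ω)) μ :=
  hf.integrable_mul hg.star

lemma secondMomentMatrix_mulVec (hx : ∀ k, MemLp (fun ω => x ω k) 2 μ)
    (M : Matrix m n 𝕜) :
    secondMomentMatrix μ (fun ω => M *ᵥ x ω) = M * secondMomentMatrix μ x * Mᴴ := by
  ext i j
  have hterm : ∀ k l, Integrable (fun ω => M i k * (x ω k * conj (x ω l)) * conj (M j l)) μ :=
    fun k l => (((hx k).integrable_mul_conj (hx l)).const_mul _).mul_const _
  calc ∫ ω, (M *ᵥ x ω) i * conj ((M *ᵥ x ω) j) ∂μ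
      = ∫ ω, ∑ l, ∑ k, M i k * (x ω k * conj (x ω l)) * conj (M j l) ∂μ := by
        congr 1 with ω
        simp only [mulVec, dotProduct, map_sum, map_mul, Finset.sum_mul_sum]
        rw [Finset.sum_comm]
        exact Finset.sum_congr rfl fun l _ => Finset.sum_congr rfl fun k _ => by ring
    _ = ∑ l, (∑ k, M i k * ∫ ω, x ω k * conj (x ω l) ∂μ) * conj (M j l) := by
        rw [integral_finsetSum _ fun l _ => integrable_finsetSum _ fun k _ => hterm k l]
        refine Finset.sum_congr rfl fun l _ => ?_
        rw [integral_finsetSum _ fun k _ => hterm k l, Finset.sum_mul]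
        simp only [integral_mul_const, integral_const_mul]

lemma integral_mulVec_mul_mulVec_apply (hx : Measurable x) (hy : Measurable y)
    (hxy : IndepFun x y μ) (hx1 : ∀ k, Integrable (fun ω => x ω k) μ)
    (hy1 : ∀ k, Integrable (fun ω => y ω k) μ) (A : Matrix m n 𝕜) (C : Matrix m p 𝕜) (i : m) :
    ∫ ω, (A *ᵥ x ω) i * (C *ᵥ y ω) i ∂μ =
      (A *ᵥ fun k => ∫ ω, x ω k ∂μ) i * (C *ᵥ fun k => ∫ ω, y ω k ∂μ) i := by
  rw [hxy.integral_fun_comp_mul_comp (f := fun v => (A *ᵥ v) i) (g := fun v => (C *ᵥ v) i)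
    hx.aemeasurable hy.aemeasurable (by fun_prop) (by fun_prop),
    integral_mulVec_apply hx1, integral_mulVec_apply hy1]

lemma secondMomentMatrix_mulVec_mul_mulVec (hx : Measurable x) (hy : Measurable y)
    (hxy : IndepFun x y μ) (hx2 : ∀ k, MemLp (fun ω => x ω k) 2 μ)
    (hy2 : ∀ k, MemLp (fun ω => y ω k) 2 μ) (A : Matrix m n 𝕜) (C : Matrix m p 𝕜) :
    secondMomentMatrix μ (fun ω => (A *ᵥ x ω) * (C *ᵥ y ω)) =
      (A * secondMomentMatrix μ x * Aᴴ) ⊙ (C * secondMomentMatrix μ y * Cᴴ) := by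
  rw [← secondMomentMatrix_mulVec hx2, ← secondMomentMatrix_mulVec hy2]
  ext i j
  calc ∫ ω, ((A *ᵥ x ω) * (C *ᵥ y ω)) i * conj (((A *ᵥ x ω) * (C *ᵥ y ω)) j) ∂μ
      = ∫ ω, (A *ᵥ x ω) i * star ((A *ᵥ x ω) j) * ((C *ᵥ y ω) i * star ((C *ᵥ y ω) j)) ∂μ := by
        congr 1 with ω
        rw [Pi.mul_apply, Pi.mul_apply, map_mul, starRingEnd_apply, starRingEnd_apply]
        ring
    _ = _ :=
        hxy.integral_fun_comp_mul_comp (f := fun v => (A *ᵥ v) i * star ((A *ᵥ v) j))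
          (g := fun v => (C *ᵥ v) i * star ((C *ᵥ v) j)) hx.aemeasurable hy.aemeasurable
          (by fun_prop : Continuous _).aestronglyMeasurable
          (by fun_prop : Continuous _).aestronglyMeasurable

end SecondMoment

theorem interference_mean_zero_and_covariance_general
    {Ω : Type*} [MeasurableSpace Ω] (μ : Measure Ω) [IsProbabilityMeasure μ]
    (N q D : ℕ) (h : Ω → Fin N → ℂ) (d : Ω → Fin q → ℂ)
    (hmh : Measurable h) (hmd : Measurable d)
    (hindep : IndepFun h d μ)
    (hl2h : ∀ i, MemLp (fun ω => h ω i) 2 μ)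
    (hl2d : ∀ i, MemLp (fun ω => d ω i) 2 μ)
    (Es : ℝ)
    (hd0 : ∀ i, ∫ ω, d ω i ∂μ = 0)
    (hdcov : ∀ i j, ∫ ω, d ω i * conj (d ω j) ∂μ = if i = j then (Es : ℂ) else 0)
    (Sig : Matrix (Fin N) (Fin N) ℂ)
    (hSig : ∀ i j, Sig i j = ∫ ω, h ω i * conj (h ω j) ∂μ)
    (F : Matrix (Fin D) (Fin N) ℂ) (B : Matrix (Fin D) (Fin q) ℂ)
    (Ψ : Ω → Fin D → ℂ)
    (hΨ : ∀ ω i, Ψ ω i = B.mulVec (d ω) i * F.mulVec (h ω) i) :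
    (∀ i, ∫ ω, Ψ ω i ∂μ = 0) ∧
    (∀ i j, ∫ ω, Ψ ω i * conj (Ψ ω j) ∂μ
      = (Es : ℂ) * ((F * Sig * Fᴴ) i j * (B * Bᴴ) i j)) := by
  have hΨ' : Ψ = fun ω => (B *ᵥ d ω) * (F *ᵥ h ω) := funext fun ω => funext (hΨ ω)
  have hd_moment : secondMomentMatrix μ d = (Es : ℂ) • 1 := by
    ext i j
    simp [secondMomentMatrix, hdcov, one_apply]
  have hh_moment : secondMomentMatrix μ h = Sig := by
    ext i j
    simp [secondMomentMatrix, hSig]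
  refine ⟨fun i => ?_, fun i j => ?_⟩
  · simp_rw [hΨ]
    rw [integral_mulVec_mul_mulVec_apply hmd hmh hindep.symm
      (fun k => (hl2d k).integrable one_le_two) (fun k => (hl2h k).integrable one_le_two)]
    simp [hd0, mulVec, dotProduct]
  · have hcov := secondMomentMatrix_mulVec_mul_mulVec hmd hmh hindep.symm hl2d hl2h B F
    rw [hd_moment, hh_moment, ← hΨ'] at hcov
    refine (congr_fun₂ hcov i j).trans ?_
    simp only [hadamard_apply, Matrix.mul_smul, Matrix.mul_one, Matrix.smul_mul,
      Matrix.smul_apply, smul_eq_mul]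
    ring

/-- Let `h : Ω → ℂ^N` and `d : Ω → ℂ^q` be independent random vectors with
square-integrable entries, `E[d] = 0`, `E[d dᴴ] = E_s I_q` with `E_s > 0`, and
`E[h hᴴ] = Σ_hh`.  For deterministic `F ∈ ℂ^{D×N}`, `B ∈ ℂ^{D×q}`, the random vector
`Ψ = diag(B d) · F h` satisfies `E[Ψ] = 0` and
`E[Ψ Ψᴴ] = E_s · (F Σ_hh Fᴴ) ∘ (B Bᴴ)` (Hadamard product, stated entrywise). -/
theorem interference_mean_zero_and_covariance
    {Ω : Type*} [MeasurableSpace Ω] (μ : Measure Ω) [IsProbabilityMeasure μ]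
    (N q D : ℕ) (h : Ω → Fin N → ℂ) (d : Ω → Fin q → ℂ)
    (hmh : Measurable h) (hmd : Measurable d)
    (hindep : IndepFun h d μ)
    (hl2h : ∀ i, MemLp (fun ω => h ω i) 2 μ)
    (hl2d : ∀ i, MemLp (fun ω => d ω i) 2 μ)
    (Es : ℝ) (hEs : 0 < Es)
    (hd0 : ∀ i, ∫ ω, d ω i ∂μ = 0)
    (hdcov : ∀ i j, ∫ ω, d ω i * conj (d ω j) ∂μ = if i = j then (Es : ℂ) else 0)
    (Sig : Matrix (Fin N) (Fin N) ℂ)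
    (hSig : ∀ i j, Sig i j = ∫ ω, h ω i * conj (h ω j) ∂μ)
    (F : Matrix (Fin D) (Fin N) ℂ) (B : Matrix (Fin D) (Fin q) ℂ)
    (Ψ : Ω → Fin D → ℂ)
    (hΨ : ∀ ω i, Ψ ω i = B.mulVec (d ω) i * F.mulVec (h ω) i) :
    (∀ i, ∫ ω, Ψ ω i ∂μ = 0) ∧
    (∀ i j, ∫ ω, Ψ ω i * conj (Ψ ω j) ∂μ
      = (Es : ℂ) * ((F * Sig * Fᴴ) i j * (B * Bᴴ) i j)) :=
  interference_mean_zero_and_covariance_general μ N q D h d hmh hmd hindep hl2h hl2d Es hd0 hdcov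
    Sig hSig F B Ψ hΨ
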